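/- (Derivative estimate for Gevrey quasi-norms, inequality (3.26)) Fix s > 1, h ∈ (0,1] and n ≥ 2, and let N̄_{m,k}(a,T) denote the Gevrey quasi-norm. Then for every smooth a : ℝ^n × ℝ^{n−1} → ℂ, every m, k ∈ ℝ, every ε > 0, every T > 0, and all multi-indices α ∈ ℕ^n, β ∈ ℕ^{n−1}, one has N̄_{m, k−|β|}(∂_x^α ∂_{ξ'}^β a, T) ≤ ε^{−s(|α|+|β|)} T^{−(|α|+|β|)} (α!)^s (β!)^s N̄_{m,k}(a, T(1+ε)^s). -/

import Mathlib

open scoped BigOperators Real ENNReal NNReal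
open MeasureTheory

noncomputable section

variable {n m : ℕ} {E : Type*} [NormedAddCommGroup E] [NormedSpace ℝ E]

/-- Partial derivative in the `i`-th coordinate of the first factor. -/
def pdx (i : Fin n) (f : (Fin n → ℝ) × (Fin m → ℝ) → E) :
    (Fin n → ℝ) × (Fin m → ℝ) → E :=
  fun p => fderiv ℝ f p (Pi.single i 1, 0)

/-- Partial derivative in the `j`-th coordinate of the second factor. -/
def pdy (j : Fin m) (f : (Fin n → ℝ) × (Fin m → ℝ) → E) :
    (Fin n → ℝ) × (Fin m → ℝ) → E :=
  fun p => fderiv ℝ f p (0, Pi.single j 1)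

/-- Iterated partial derivative ∂_x^α in the first factor. -/
def mdx (α : Fin n → ℕ) (f : (Fin n → ℝ) × (Fin m → ℝ) → E) :
    (Fin n → ℝ) × (Fin m → ℝ) → E :=
  (List.finRange n).foldr (fun i g => (pdx i)^[α i] g) f

/-- Iterated partial derivative ∂_y^β in the second factor. -/
def mdy (β : Fin m → ℕ) (f : (Fin n → ℝ) × (Fin m → ℝ) → E) :
    (Fin n → ℝ) × (Fin m → ℝ) → E :=
  (List.finRange m).foldr (fun j g => (pdy j)^[β j] g) f

/-- Partial derivative on a single Euclidean factor. -/
def pd {d : ℕ} (i : Fin d) (f : (Fin d → ℝ) → E) : (Fin d → ℝ) → E :=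
  fun x => fderiv ℝ f x (Pi.single i 1)

/-- Iterated partial derivative ∂^α on a single Euclidean factor. -/
def md {d : ℕ} (α : Fin d → ℕ) (f : (Fin d → ℝ) → E) : (Fin d → ℝ) → E :=
  (List.finRange d).foldr (fun i g => (pd i)^[α i] g) f

/-- Multi-index factorial `α!`. -/
def mfact {d : ℕ} (α : Fin d → ℕ) : ℕ := ∏ i, (α i).factorial

/-- Multi-index length `|α|`. -/
def msize {d : ℕ} (α : Fin d → ℕ) : ℕ := ∑ i, α i

/-- The Gevrey quasi-norm
`N̄_{m,k}(a,T) = sup_{(x,ξ')} Σ_{α,β} |∂_x^α ∂_{ξ'}^β a| T^{|α|+|β|} h^m ⟨ξ'⟩^{|β|-k} / (α!^s β!^s)`,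
with values in `[0,∞]`. -/
def qnorm (n : ℕ) (s h T m k : ℝ)
    (a : (Fin n → ℝ) × (Fin (n-1) → ℝ) → ℂ) : ℝ≥0∞ :=
  ⨆ p : (Fin n → ℝ) × (Fin (n-1) → ℝ),
    ∑' (α : Fin n → ℕ) (β : Fin (n-1) → ℕ),
      ENNReal.ofReal (‖mdx α (mdy β a) p‖ * T ^ (msize α + msize β) * h ^ m *
        (Real.sqrt (1 + ∑ i, (p.2 i) ^ 2)) ^ ((msize β : ℝ) - k) /
        ((mfact α * mfact β : ℕ) : ℝ) ^ s)

/-!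
Write `W_T(γ) = T^|γ| / (γ!)^s`. After commuting the derivatives, the `(α', β')` term of
`N̄_{m,k-|β|}(∂^α ∂^β a, T)` is the `(α + α', β + β')` term of `N̄_{m,k}(a, T(1+ε)^s)` with the
weight `W_{T(1+ε)^s}(α + α') W_{T(1+ε)^s}(β + β')` replaced by `W_T(α') W_T(β')`. Since
`(γ + γ')! = binom(γ + γ', γ) γ! γ'!` and `binom(γ + γ', γ) ε^|γ| ≤ (1 + ε)^|γ + γ'|`, the weights
compare with the factor `ε^{-s|γ|} T^{-|γ|} (γ!)^s`. The shift `(α', β') ↦ (α + α', β + β')` is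
injective, so summing over the terms and taking the supremum over the point gives the estimate.
-/

open scoped ContDiff

section DirectionalDerivatives

variable {F : Type*} [NormedAddCommGroup F] [NormedSpace ℝ F]

def dirDeriv (v : F) (f : F → E) : F → E := fun p => fderiv ℝ f p v

def multiDirDeriv {ι : Type*} (l : List ι) (v : ι → F) (e : ι → ℕ) (f : F → E) : F → E :=
  l.foldr (fun i g => (dirDeriv (v i))^[e i] g) f

variable {f : F → E}

lemma contDiff_dirDeriv (hf : ContDiff ℝ ∞ f) (v : F) : ContDiff ℝ ∞ (dirDeriv v f) :=
  (hf.fderiv_right (m := ∞) le_rfl).clm_apply contDiff_const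

lemma contDiff_iterate_dirDeriv (hf : ContDiff ℝ ∞ f) (v : F) (k : ℕ) :
    ContDiff ℝ ∞ ((dirDeriv v)^[k] f) := by
  induction k with
  | zero => exact hf
  | succ k ih => rw [Function.iterate_succ_apply']; exact contDiff_dirDeriv ih v

lemma contDiff_multiDirDeriv {ι : Type*} (hf : ContDiff ℝ ∞ f) (l : List ι) (v : ι → F)
    (e : ι → ℕ) : ContDiff ℝ ∞ (multiDirDeriv l v e f) := by
  induction l with
  | nil => exact hf
  | cons i l ih => exact contDiff_iterate_dirDeriv ih (v i) (e i)

lemma dirDeriv_dirDeriv_apply (hf : ContDiff ℝ ∞ f) (v w p : F) :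
    dirDeriv v (dirDeriv w f) p = fderiv ℝ (fderiv ℝ f) p v w := by
  have hdiff : Differentiable ℝ (fderiv ℝ f) :=
    (hf.fderiv_right (m := ∞) le_rfl).differentiable (by simp)
  change fderiv ℝ (fun q => fderiv ℝ f q w) p v = _
  simp [fderiv_clm_apply (hdiff p) (differentiableAt_const w)]

lemma dirDeriv_comm (hf : ContDiff ℝ ∞ f) (v w : F) :
    dirDeriv v (dirDeriv w f) = dirDeriv w (dirDeriv v f) := by
  funext p
  rw [dirDeriv_dirDeriv_apply hf, dirDeriv_dirDeriv_apply hf]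
  exact hf.contDiffAt.isSymmSndFDerivAt (by
    rw [minSmoothness_of_isRCLikeNormedField]; exact WithTop.coe_le_coe.mpr le_top) v w

lemma dirDeriv_iterate_dirDeriv (hf : ContDiff ℝ ∞ f) (v w : F) (k : ℕ) :
    dirDeriv v ((dirDeriv w)^[k] f) = (dirDeriv w)^[k] (dirDeriv v f) := by
  induction k with
  | zero => rfl
  | succ k ih =>
    rw [Function.iterate_succ_apply', Function.iterate_succ_apply',
      dirDeriv_comm (contDiff_iterate_dirDeriv hf w k) v w, ih]

lemma dirDeriv_multiDirDeriv {ι : Type*} (hf : ContDiff ℝ ∞ f) (l : List ι) (v : ι → F)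
    (e : ι → ℕ) (w : F) :
    dirDeriv w (multiDirDeriv l v e f) = multiDirDeriv l v e (dirDeriv w f) := by
  induction l with
  | nil => rfl
  | cons i l ih =>
    change dirDeriv w ((dirDeriv (v i))^[e i] (multiDirDeriv l v e f)) =
      (dirDeriv (v i))^[e i] (multiDirDeriv l v e (dirDeriv w f))
    rw [dirDeriv_iterate_dirDeriv (contDiff_multiDirDeriv hf l v e), ih]

lemma iterate_dirDeriv_multiDirDeriv {ι : Type*} (hf : ContDiff ℝ ∞ f) (l : List ι)
    (v : ι → F) (e : ι → ℕ) (w : F) (k : ℕ) :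
    (dirDeriv w)^[k] (multiDirDeriv l v e f) = multiDirDeriv l v e ((dirDeriv w)^[k] f) := by
  induction k with
  | zero => rfl
  | succ k ih =>
    rw [Function.iterate_succ_apply', ih,
      dirDeriv_multiDirDeriv (contDiff_iterate_dirDeriv hf w k),
      ← Function.iterate_succ_apply' (dirDeriv w)]

lemma multiDirDeriv_comm {ι κ : Type*} (hf : ContDiff ℝ ∞ f) (l : List ι) (v : ι → F)
    (e : ι → ℕ) (l' : List κ) (v' : κ → F) (e' : κ → ℕ) :
    multiDirDeriv l v e (multiDirDeriv l' v' e' f) =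
      multiDirDeriv l' v' e' (multiDirDeriv l v e f) := by
  induction l with
  | nil => rfl
  | cons i l ih =>
    change (dirDeriv (v i))^[e i] (multiDirDeriv l v e (multiDirDeriv l' v' e' f)) =
      multiDirDeriv l' v' e' ((dirDeriv (v i))^[e i] (multiDirDeriv l v e f))
    rw [ih, iterate_dirDeriv_multiDirDeriv (contDiff_multiDirDeriv hf l v e)]

lemma multiDirDeriv_add {ι : Type*} (hf : ContDiff ℝ ∞ f) (l : List ι) (v : ι → F)
    (e e' : ι → ℕ) :
    multiDirDeriv l v (e + e') f = multiDirDeriv l v e (multiDirDeriv l v e' f) := by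
  induction l with
  | nil => rfl
  | cons i l ih =>
    change (dirDeriv (v i))^[e i + e' i] (multiDirDeriv l v (e + e') f) =
      (dirDeriv (v i))^[e i] (multiDirDeriv l v e ((dirDeriv (v i))^[e' i]
        (multiDirDeriv l v e' f)))
    rw [ih, Function.iterate_add_apply,
      iterate_dirDeriv_multiDirDeriv (contDiff_multiDirDeriv hf l v e')]

end DirectionalDerivatives

section PartialDerivatives

variable {f : (Fin n → ℝ) × (Fin m → ℝ) → E}

lemma contDiff_mdy (hf : ContDiff ℝ ∞ f) (β : Fin m → ℕ) : ContDiff ℝ ∞ (mdy β f) :=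
  contDiff_multiDirDeriv hf _ _ _

lemma mdy_mdx (hf : ContDiff ℝ ∞ f) (α : Fin n → ℕ) (β : Fin m → ℕ) :
    mdy β (mdx α f) = mdx α (mdy β f) :=
  (multiDirDeriv_comm hf _ _ _ _ _ _).symm

lemma mdx_add (hf : ContDiff ℝ ∞ f) (α α' : Fin n → ℕ) :
    mdx (α + α') f = mdx α' (mdx α f) := by
  rw [add_comm]; exact multiDirDeriv_add hf _ _ α' α

lemma mdy_add (hf : ContDiff ℝ ∞ f) (β β' : Fin m → ℕ) :
    mdy (β + β') f = mdy β' (mdy β f) := by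
  rw [add_comm]; exact multiDirDeriv_add hf _ _ β' β

lemma mdx_mdy_mdx_mdy (hf : ContDiff ℝ ∞ f) (α α' : Fin n → ℕ) (β β' : Fin m → ℕ) :
    mdx α' (mdy β' (mdx α (mdy β f))) = mdx (α + α') (mdy (β + β') f) := by
  rw [mdy_mdx (contDiff_mdy hf β), mdy_add hf, mdx_add (contDiff_mdy (contDiff_mdy hf β) β')]

end PartialDerivatives

section MultiIndex

variable {d : ℕ}

def mchoose (γ δ : Fin d → ℕ) : ℕ := ∏ i, (γ i).choose (δ i)

lemma msize_add (γ γ' : Fin d → ℕ) : msize (γ + γ') = msize γ + msize γ' :=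
  Finset.sum_add_distrib

lemma mfact_pos (γ : Fin d → ℕ) : 0 < mfact γ :=
  Finset.prod_pos fun i _ => (γ i).factorial_pos

lemma mchoose_add_pos (γ γ' : Fin d → ℕ) : 0 < mchoose (γ + γ') γ :=
  Finset.prod_pos fun _ _ => Nat.choose_pos (Nat.le_add_right _ _)

lemma mfact_add (γ γ' : Fin d → ℕ) :
    mfact (γ + γ') = mchoose (γ + γ') γ * (mfact γ * mfact γ') := by
  simp only [mfact, mchoose, ← Finset.prod_mul_distrib]
  refine Finset.prod_congr rfl fun i _ => ?_
  rw [Pi.add_apply, add_comm, ← Nat.add_choose_mul_factorial_mul_factorial (γ' i) (γ i)]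
  ring

lemma choose_mul_pow_le_one_add_pow {ε : ℝ} (hε : 0 ≤ ε) (N K : ℕ) :
    (N.choose K : ℝ) * ε ^ K ≤ (1 + ε) ^ N := by
  rcases le_or_gt K N with hKN | hKN
  · rw [add_comm, add_pow]
    calc (N.choose K : ℝ) * ε ^ K = ε ^ K * 1 ^ (N - K) * N.choose K := by ring
      _ ≤ ∑ j ∈ Finset.range (N + 1), ε ^ j * 1 ^ (N - j) * N.choose j :=
        Finset.single_le_sum (f := fun j => ε ^ j * 1 ^ (N - j) * (N.choose j : ℝ))
          (fun j _ => by positivity) (Finset.mem_range_succ_iff.mpr hKN)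
  · rw [Nat.choose_eq_zero_of_lt hKN, Nat.cast_zero, zero_mul]
    positivity

lemma mchoose_mul_pow_le {ε : ℝ} (hε : 0 ≤ ε) (γ γ' : Fin d → ℕ) :
    (mchoose (γ + γ') γ : ℝ) * ε ^ msize γ ≤ (1 + ε) ^ msize (γ + γ') := by
  simp only [mchoose, msize, Nat.cast_prod, ← Finset.prod_pow_eq_pow_sum,
    ← Finset.prod_mul_distrib]
  exact Finset.prod_le_prod (fun i _ => by positivity)
    fun i _ => choose_mul_pow_le_one_add_pow hε _ _

end MultiIndex

section GevreyWeight

variable {d : ℕ} {s ε T : ℝ}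

def gevreyWeight (s T : ℝ) (γ : Fin d → ℕ) : ℝ := T ^ msize γ / (mfact γ : ℝ) ^ s

lemma gevreyWeight_nonneg (hT : 0 ≤ T) (γ : Fin d → ℕ) : 0 ≤ gevreyWeight s T γ := by
  unfold gevreyWeight; positivity

lemma gevreyWeight_le_shift (hs : 0 ≤ s) (hε : 0 < ε) (hT : 0 < T) (γ γ' : Fin d → ℕ) :
    gevreyWeight s T γ' ≤ ε ^ (-(s * msize γ)) * T ^ (-(msize γ : ℝ)) * (mfact γ : ℝ) ^ s *
      gevreyWeight s (T * (1 + ε) ^ s) (γ + γ') := by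
  set N := msize γ
  set B : ℝ := (mchoose (γ + γ') γ : ℝ)
  have hB : 0 < B := Nat.cast_pos.mpr (mchoose_add_pos γ γ')
  have hF : (0 : ℝ) < mfact γ := Nat.cast_pos.mpr (mfact_pos γ)
  have hF' : (0 : ℝ) < mfact γ' := Nat.cast_pos.mpr (mfact_pos γ')
  have hbinom : (B * ε ^ N) ^ s ≤ ((1 + ε) ^ msize (γ + γ')) ^ s :=
    Real.rpow_le_rpow (by positivity) (mchoose_mul_pow_le hε.le γ γ') hs
  have hεN : ε ^ (-(s * N)) = ((ε ^ N) ^ s)⁻¹ := by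
    rw [Real.rpow_neg hε.le, mul_comm, Real.rpow_natCast_mul hε.le]
  have hTN : T ^ (-(N : ℝ)) = (T ^ N)⁻¹ := by rw [Real.rpow_neg hT.le, Real.rpow_natCast]
  have hTε : (T * (1 + ε) ^ s) ^ msize (γ + γ') =
      T ^ msize (γ + γ') * ((1 + ε) ^ msize (γ + γ')) ^ s := by
    rw [mul_pow, Real.rpow_pow_comm (by positivity)]
  have hTadd : T ^ msize (γ + γ') = T ^ N * T ^ msize γ' := by rw [msize_add, pow_add]
  unfold gevreyWeight
  rw [hεN, hTN, hTε, hTadd, mfact_add, Nat.cast_mul, Nat.cast_mul,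
    Real.mul_rpow hB.le (by positivity), Real.mul_rpow hF.le hF'.le]
  rw [Real.mul_rpow hB.le (by positivity)] at hbinom
  have hratio : 1 ≤ ((1 + ε) ^ msize (γ + γ')) ^ s / (B ^ s * (ε ^ N) ^ s) :=
    (one_le_div (by positivity)).mpr hbinom
  calc T ^ msize γ' / (mfact γ' : ℝ) ^ s
      ≤ T ^ msize γ' / (mfact γ' : ℝ) ^ s *
          (((1 + ε) ^ msize (γ + γ')) ^ s / (B ^ s * (ε ^ N) ^ s)) :=
        le_mul_of_one_le_right (by positivity) hratio
    _ = _ := by field_simp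

lemma gevreyWeight_mul_le_shift {d' : ℕ} (hs : 0 ≤ s) (hε : 0 < ε) (hT : 0 < T)
    (α α' : Fin d → ℕ) (β β' : Fin d' → ℕ) :
    gevreyWeight s T α' * gevreyWeight s T β' ≤
      (ε ^ (-(s * ((msize α + msize β : ℕ) : ℝ))) * T ^ (-((msize α + msize β : ℕ) : ℝ)) *
          ((mfact α : ℕ) : ℝ) ^ s * ((mfact β : ℕ) : ℝ) ^ s) *
        (gevreyWeight s (T * (1 + ε) ^ s) (α + α') *
          gevreyWeight s (T * (1 + ε) ^ s) (β + β')) := by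
  have hTε : 0 ≤ T * (1 + ε) ^ s := by positivity
  calc gevreyWeight s T α' * gevreyWeight s T β'
      ≤ (ε ^ (-(s * msize α)) * T ^ (-(msize α : ℝ)) * (mfact α : ℝ) ^ s *
            gevreyWeight s (T * (1 + ε) ^ s) (α + α')) *
          (ε ^ (-(s * msize β)) * T ^ (-(msize β : ℝ)) * (mfact β : ℝ) ^ s *
            gevreyWeight s (T * (1 + ε) ^ s) (β + β')) :=
        mul_le_mul (gevreyWeight_le_shift hs hε hT α α') (gevreyWeight_le_shift hs hε hT β β')
          (gevreyWeight_nonneg hT.le β')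
          (mul_nonneg (by positivity) (gevreyWeight_nonneg hTε (α + α')))
    _ = _ := by
        rw [Nat.cast_add, mul_add, neg_add, Real.rpow_add hε, neg_add, Real.rpow_add hT]
        ring

lemma qnorm_summand_eq {d' : ℕ} (s T x u v : ℝ) (α : Fin d → ℕ) (β : Fin d' → ℕ) :
    x * T ^ (msize α + msize β) * u * v / ((mfact α * mfact β : ℕ) : ℝ) ^ s =
      x * u * v * (gevreyWeight s T α * gevreyWeight s T β) := by
  unfold gevreyWeight
  rw [Nat.cast_mul, Real.mul_rpow (Nat.cast_nonneg _) (Nat.cast_nonneg _), pow_add]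
  ring

end GevreyWeight

def qnormTerm (n : ℕ) (s h T m k : ℝ) (a : (Fin n → ℝ) × (Fin (n-1) → ℝ) → ℂ)
    (p : (Fin n → ℝ) × (Fin (n-1) → ℝ)) (α : Fin n → ℕ) (β : Fin (n-1) → ℕ) : ℝ≥0∞ :=
  ENNReal.ofReal (‖mdx α (mdy β a) p‖ * T ^ (msize α + msize β) * h ^ m *
    (Real.sqrt (1 + ∑ i, (p.2 i) ^ 2)) ^ ((msize β : ℝ) - k) /
    ((mfact α * mfact β : ℕ) : ℝ) ^ s)

lemma qnorm_eq_iSup_tsum_qnormTerm (n : ℕ) (s h T m k : ℝ)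
    (a : (Fin n → ℝ) × (Fin (n-1) → ℝ) → ℂ) :
    qnorm n s h T m k a = ⨆ p, ∑' (α : Fin n → ℕ) (β : Fin (n-1) → ℕ),
      qnormTerm n s h T m k a p α β := rfl

lemma qnormTerm_mdx_mdy_le {n : ℕ} {s h T m k ε : ℝ} (hs : 0 ≤ s) (hh : 0 < h) (hε : 0 < ε)
    (hT : 0 < T) {a : (Fin n → ℝ) × (Fin (n-1) → ℝ) → ℂ} (ha : ContDiff ℝ ∞ a)
    (α α' : Fin n → ℕ) (β β' : Fin (n-1) → ℕ) (p : (Fin n → ℝ) × (Fin (n-1) → ℝ)) :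
    qnormTerm n s h T m (k - msize β) (mdx α (mdy β a)) p α' β' ≤
      ENNReal.ofReal (ε ^ (-(s * ((msize α + msize β : ℕ) : ℝ))) *
          T ^ (-((msize α + msize β : ℕ) : ℝ)) *
          ((mfact α : ℕ) : ℝ) ^ s * ((mfact β : ℕ) : ℝ) ^ s) *
        qnormTerm n s h (T * (1 + ε) ^ s) m k a p (α + α') (β + β') := by
  have hexp : (msize β' : ℝ) - (k - msize β) = (msize (β + β') : ℝ) - k := by
    rw [msize_add]; push_cast; ring
  unfold qnormTerm
  rw [← ENNReal.ofReal_mul (by positivity), mdx_mdy_mdx_mdy ha, hexp, qnorm_summand_eq,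
    qnorm_summand_eq]
  refine ENNReal.ofReal_le_ofReal ((mul_le_mul_of_nonneg_left
    (gevreyWeight_mul_le_shift hs hε hT α α' β β') ?_).trans_eq (mul_left_comm _ _ _))
  have : 0 < h ^ m := Real.rpow_pos_of_pos hh m
  positivity

lemma ENNReal.tsum_tsum_comp_le_tsum_tsum_of_injective {ι ι' κ κ' : Type*} {g : ι' → ι}
    {g' : κ' → κ} (hg : Function.Injective g) (hg' : Function.Injective g')
    (f : ι → κ → ℝ≥0∞) : ∑' i, ∑' j, f (g i) (g' j) ≤ ∑' i, ∑' j, f i j :=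
  (ENNReal.tsum_le_tsum fun i => ENNReal.tsum_comp_le_tsum_of_injective hg' (f (g i))).trans
    (ENNReal.tsum_comp_le_tsum_of_injective hg fun i => ∑' j, f i j)

theorem qnorm_deriv_estimate_general
    (s : ℝ) (hs : 1 < s) (h : ℝ) (hh : h ∈ Set.Ioc (0:ℝ) 1) (n : ℕ)
    (a : (Fin n → ℝ) × (Fin (n-1) → ℝ) → ℂ) (ha : ContDiff ℝ (⊤ : ℕ∞) a)
    (m k : ℝ) (ε : ℝ) (hε : 0 < ε) (T : ℝ) (hT : 0 < T)
    (α : Fin n → ℕ) (β : Fin (n-1) → ℕ) :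
    qnorm n s h T m (k - (msize β : ℝ)) (mdx α (mdy β a)) ≤
      ENNReal.ofReal (ε ^ (-(s * ((msize α + msize β : ℕ) : ℝ))) *
          T ^ (-((msize α + msize β : ℕ) : ℝ)) *
          ((mfact α : ℕ) : ℝ) ^ s * ((mfact β : ℕ) : ℝ) ^ s) *
        qnorm n s h (T * (1 + ε) ^ s) m k a := by
  set C := ε ^ (-(s * ((msize α + msize β : ℕ) : ℝ))) * T ^ (-((msize α + msize β : ℕ) : ℝ)) *
    ((mfact α : ℕ) : ℝ) ^ s * ((mfact β : ℕ) : ℝ) ^ s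
  rw [qnorm_eq_iSup_tsum_qnormTerm, qnorm_eq_iSup_tsum_qnormTerm]
  refine iSup_le fun p => ?_
  set G := qnormTerm n s h (T * (1 + ε) ^ s) m k a
  calc ∑' α', ∑' β', qnormTerm n s h T m (k - msize β) (mdx α (mdy β a)) p α' β'
      ≤ ∑' α', ∑' β', ENNReal.ofReal C * G p (α + α') (β + β') :=
        ENNReal.tsum_le_tsum fun α' => ENNReal.tsum_le_tsum fun β' =>
          qnormTerm_mdx_mdy_le (by linarith) hh.1 hε hT ha α α' β β' p
    _ = ENNReal.ofReal C * ∑' α', ∑' β', G p (α + α') (β + β') := by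
        simp only [ENNReal.tsum_mul_left]
    _ ≤ ENNReal.ofReal C * ∑' α'', ∑' β'', G p α'' β'' :=
        mul_le_mul_right (ENNReal.tsum_tsum_comp_le_tsum_tsum_of_injective
          (add_right_injective α) (add_right_injective β) _) _
    _ ≤ ENNReal.ofReal C * ⨆ p, ∑' α'', ∑' β'', G p α'' β'' :=
        mul_le_mul_right (le_iSup (fun p => ∑' α'', ∑' β'', G p α'' β'') p) _

/-- **Derivative estimate for Gevrey quasi-norms** (inequality (3.26)):
`N̄_{m,k−|β|}(∂_x^α ∂_{ξ'}^β a, T) ≤ ε^{−s(|α|+|β|)} T^{−(|α|+|β|)} α!^s β!^s N̄_{m,k}(a,T(1+ε)^s)`. -/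
theorem qnorm_deriv_estimate
    (s : ℝ) (hs : 1 < s) (h : ℝ) (hh : h ∈ Set.Ioc (0:ℝ) 1) (n : ℕ) (hn : 2 ≤ n)
    (a : (Fin n → ℝ) × (Fin (n-1) → ℝ) → ℂ) (ha : ContDiff ℝ (⊤ : ℕ∞) a)
    (m k : ℝ) (ε : ℝ) (hε : 0 < ε) (T : ℝ) (hT : 0 < T)
    (α : Fin n → ℕ) (β : Fin (n-1) → ℕ) :
    qnorm n s h T m (k - (msize β : ℝ)) (mdx α (mdy β a)) ≤
      ENNReal.ofReal (ε ^ (-(s * ((msize α + msize β : ℕ) : ℝ))) *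
          T ^ (-((msize α + msize β : ℕ) : ℝ)) *
          ((mfact α : ℕ) : ℝ) ^ s * ((mfact β : ℕ) : ℝ) ^ s) *
        qnorm n s h (T * (1 + ε) ^ s) m k a :=
  qnorm_deriv_estimate_general s hs h hh n a ha m k ε hε T hT α β
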